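/- Incremental cyclo-dissipativity of the reactive current controller (Theorem 1, item 3): let (θ̄, ω̄, V̄) satisfy V̄ ∈ ℝⁿ_{>0} and ω̄ = ω⁰·1 for some ω⁰ ∈ ℝ, put P̄ := P(θ̄,V̄), Q̄ := Q(θ̄,V̄), let ū_P ∈ ℝⁿ satisfy 0 = −(ω̄ − ω*) − K_P(P̄ − P*) + ū_P, and set ū_Q := [V̄]⁻¹ Q̄. Then for every θ ∈ ℝⁿ, ω ∈ ℝⁿ, V ∈ ℝⁿ_{>0} and u_P, u_Q ∈ ℝⁿ, defining g := [V]⁻¹ Q(θ,V) − [V̄]⁻¹ Q̄, the following identity holds: (P(θ,V) − P̄)ᵀ ω + (ω − ω̄)ᵀ K_P⁻¹ (−(ω − ω*) − K_P(P(θ,V) − P*) + u_P) + gᵀ T_Q⁻¹ (−[V]⁻¹ Q(θ,V) + u_Q) = −(ω − ω̄)ᵀ K_P⁻¹ (ω − ω̄) + (ω − ω̄)ᵀ K_P⁻¹ (u_P − ū_P) − gᵀ T_Q⁻¹ g + gᵀ T_Q⁻¹ (u_Q − ū_Q). -/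

import Mathlib

open Real Finset Matrix

/-- `B_ii = b̂_i + ∑_{j ≠ i} B_ij`. -/
noncomputable def Bdiag (n : ℕ) (B : Fin n → Fin n → ℝ) (bhat : Fin n → ℝ) (i : Fin n) : ℝ :=
  bhat i + ∑ j ∈ Finset.univ.erase i, B i j

/-- Active power `P_i(θ,V) = ∑_{j ≠ i} B_ij V_i V_j sin(θ_i − θ_j)`. -/
noncomputable def activeP (n : ℕ) (B : Fin n → Fin n → ℝ) (θ V : Fin n → ℝ) (i : Fin n) : ℝ :=
  ∑ j ∈ Finset.univ.erase i, B i j * V i * V j * Real.sin (θ i - θ j)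

/-- Reactive power `Q_i(θ,V) = B_ii V_i² − ∑_{j ≠ i} B_ij V_i V_j cos(θ_i − θ_j)`. -/
noncomputable def reactiveQ (n : ℕ) (B : Fin n → Fin n → ℝ) (bhat : Fin n → ℝ)
    (θ V : Fin n → ℝ) (i : Fin n) : ℝ :=
  Bdiag n B bhat i * V i ^ 2
    - ∑ j ∈ Finset.univ.erase i, B i j * V i * V j * Real.cos (θ i - θ j)

/-!
At each node, the equilibrium relation for `ūP` and the identity `Q/V = g + ūQ` turn the
left-hand summand into the right-hand one plus the cross term `ω̄ᵢ (Pᵢ - P̄ᵢ)`. Since `ω̄` is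
uniform these cross terms add up to `ω⁰ (∑ Pᵢ - ∑ P̄ᵢ)`, which vanishes: by the symmetry of `B`
and the oddness of `sin`, the line flows `Bᵢⱼ Vᵢ Vⱼ sin (θᵢ - θⱼ)` are antisymmetric, so the total
active power is zero in every state.
-/

theorem Finset.sum_sum_erase_eq_zero_of_antisymm {ι M : Type*} [Fintype ι] [DecidableEq ι]
    [AddCommMonoid M] (f : ι → ι → M) (hf : ∀ i j, f i j + f j i = 0) :
    ∑ i, ∑ j ∈ univ.erase i, f i j = 0 := by
  rw [sum_sigma']
  refine sum_involution (fun p _ => ⟨p.2, p.1⟩) (fun p _ => hf p.1 p.2) ?_ ?_ fun _ _ => rfl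
  · rintro ⟨i, j⟩ hij _ h
    simp only [mem_sigma, mem_erase] at hij
    exact hij.2.1 (congrArg Sigma.fst h)
  · rintro ⟨i, j⟩ hij
    simpa [ne_comm] using hij

theorem sum_activeP_eq_zero (n : ℕ) (B : Fin n → Fin n → ℝ) (hBsymm : ∀ i j, B i j = B j i)
    (θ V : Fin n → ℝ) : ∑ i, activeP n B θ V i = 0 :=
  sum_sum_erase_eq_zero_of_antisymm _ fun i j => by
    rw [hBsymm j i, ← neg_sub (θ i), Real.sin_neg]
    ring

theorem frequency_supply_rate_eq {k ω ωbar ωstar P Pbar Pstar uP uPbar : ℝ} (hk : k ≠ 0)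
    (huPbar : 0 = -(ωbar - ωstar) - k * (Pbar - Pstar) + uPbar) :
    (P - Pbar) * ω + (ω - ωbar) * k⁻¹ * (-(ω - ωstar) - k * (P - Pstar) + uP)
      = -((ω - ωbar) * k⁻¹ * (ω - ωbar)) + (ω - ωbar) * k⁻¹ * (uP - uPbar)
        + ωbar * (P - Pbar) := by
  field_simp
  linear_combination (ωbar - ω) * huPbar

theorem reactive_current_incremental_cyclo_dissipativity_general
    (n : ℕ)
    (B : Fin n → Fin n → ℝ)
    (hBsymm : ∀ i j, B i j = B j i)
    (bhat : Fin n → ℝ)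
    (kP TQ : Fin n → ℝ)
    (hkP : ∀ i, 0 < kP i)
    (ωstar Pstar : Fin n → ℝ)
    (θbar ωbar Vbar : Fin n → ℝ) (ω0 : ℝ)
    (hωbar : ωbar = fun _ => ω0)
    (uPbar uQbar : Fin n → ℝ)
    (huPbar : ∀ i, 0 = -(ωbar i - ωstar i)
        - kP i * (activeP n B θbar Vbar i - Pstar i) + uPbar i)
    (huQbar : uQbar = fun i => reactiveQ n B bhat θbar Vbar i / Vbar i)
    (θ ω V uP uQ : Fin n → ℝ)
    (g : Fin n → ℝ)
    (hg : ∀ i, g i = reactiveQ n B bhat θ V i / V i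
        - reactiveQ n B bhat θbar Vbar i / Vbar i) :
    ∑ i, (activeP n B θ V i - activeP n B θbar Vbar i) * ω i
      + ∑ i, (ω i - ωbar i) * (kP i)⁻¹
          * (-(ω i - ωstar i) - kP i * (activeP n B θ V i - Pstar i) + uP i)
      + ∑ i, g i * (TQ i)⁻¹ * (-(reactiveQ n B bhat θ V i / V i) + uQ i)
    =
    -∑ i, (ω i - ωbar i) * (kP i)⁻¹ * (ω i - ωbar i)
      + ∑ i, (ω i - ωbar i) * (kP i)⁻¹ * (uP i - uPbar i)
      - ∑ i, g i * (TQ i)⁻¹ * g i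
      + ∑ i, g i * (TQ i)⁻¹ * (uQ i - uQbar i) := by
  subst hωbar huQbar
  have hcross : ∑ i, ω0 * (activeP n B θ V i - activeP n B θbar Vbar i) = 0 := by
    rw [← mul_sum, sum_sub_distrib, sum_activeP_eq_zero n B hBsymm, sum_activeP_eq_zero n B hBsymm,
      sub_self, mul_zero]
  simp only [← sum_neg_distrib, ← sum_add_distrib, ← sum_sub_distrib]
  rw [← sub_eq_zero, ← sum_sub_distrib, ← hcross]
  refine sum_congr rfl fun i _ => ?_
  linear_combination frequency_supply_rate_eq (P := activeP n B θ V i) (ω := ω i) (uP := uP i)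
      (hkP i).ne' (huPbar i) + g i * (TQ i)⁻¹ * hg i

/-- Incremental cyclo-dissipativity of the reactive current controller
(Theorem 1, item 3). -/
theorem reactive_current_incremental_cyclo_dissipativity
    (n : ℕ) (G : SimpleGraph (Fin n)) [DecidableRel G.Adj]
    (hconn : G.Connected)
    (B : Fin n → Fin n → ℝ)
    (hBsymm : ∀ i j, B i j = B j i)
    (hBpos : ∀ i j, G.Adj i j → 0 < B i j)
    (hBzero : ∀ i j, ¬ G.Adj i j → B i j = 0)
    (bhat : Fin n → ℝ) (hbhat : ∀ i, 0 ≤ bhat i)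
    (kP TP TQ : Fin n → ℝ)
    (hkP : ∀ i, 0 < kP i) (hTP : ∀ i, 0 < TP i) (hTQ : ∀ i, 0 < TQ i)
    (ωstar Pstar : Fin n → ℝ)
    (θbar ωbar Vbar : Fin n → ℝ) (ω0 : ℝ)
    (hVbar : ∀ i, 0 < Vbar i)
    (hωbar : ωbar = fun _ => ω0)
    (uPbar uQbar : Fin n → ℝ)
    (huPbar : ∀ i, 0 = -(ωbar i - ωstar i)
        - kP i * (activeP n B θbar Vbar i - Pstar i) + uPbar i)
    (huQbar : uQbar = fun i => reactiveQ n B bhat θbar Vbar i / Vbar i)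
    (θ ω V uP uQ : Fin n → ℝ) (hV : ∀ i, 0 < V i)
    (g : Fin n → ℝ)
    (hg : ∀ i, g i = reactiveQ n B bhat θ V i / V i
        - reactiveQ n B bhat θbar Vbar i / Vbar i) :
    ∑ i, (activeP n B θ V i - activeP n B θbar Vbar i) * ω i
      + ∑ i, (ω i - ωbar i) * (kP i)⁻¹
          * (-(ω i - ωstar i) - kP i * (activeP n B θ V i - Pstar i) + uP i)
      + ∑ i, g i * (TQ i)⁻¹ * (-(reactiveQ n B bhat θ V i / V i) + uQ i)
    =
    -∑ i, (ω i - ωbar i) * (kP i)⁻¹ * (ω i - ωbar i)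
      + ∑ i, (ω i - ωbar i) * (kP i)⁻¹ * (uP i - uPbar i)
      - ∑ i, g i * (TQ i)⁻¹ * g i
      + ∑ i, g i * (TQ i)⁻¹ * (uQ i - uQbar i) :=
  reactive_current_incremental_cyclo_dissipativity_general n B hBsymm bhat kP TQ hkP ωstar Pstar
    θbar ωbar Vbar ω0 hωbar uPbar uQbar huPbar huQbar θ ω V uP uQ g hg
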